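/- arXiv:1102.0415 — 2 statements merged into one kernel-verified Lean document; each statement's English description precedes it below -/
import Mathlib

section
/- Let X, Y be real Banach spaces and F, G : X ⇒ Y be multifunctions. Suppose F is Lipschitz-like around (x̄,ȳ) ∈ Gr F with constant l > 0, G is Lipschitz-like around (x̄,z̄) ∈ Gr G with constant k > 0, and the pair (F,G) is locally sum-stable around (x̄,ȳ,z̄). Then the multifunction F + G is Lipschitz-like around (x̄, ȳ + z̄) with constant l + k. -/
open Metric Set Filter Topology Pointwise

/-- `F : X ⇒ Y` is Lipschitz-like around `(xb, yb)` with constant `L`. -/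
def LipschitzLikeAround {X Y : Type*} [NormedAddCommGroup X] [NormedAddCommGroup Y]
    (F : X → Set Y) (xb : X) (yb : Y) (L : ℝ) : Prop :=
  ∃ U ∈ 𝓝 xb, ∃ V ∈ 𝓝 yb, ∀ x ∈ U, ∀ u ∈ U,
    F x ∩ V ⊆ F u + closedBall (0 : Y) (L * ‖x - u‖)

/-- The pair `(F, G)` is locally sum-stable around `(xb, yb, zb)`. -/
def LocSumStable {X Y : Type*} [NormedAddCommGroup X] [NormedAddCommGroup Y]
    (F G : X → Set Y) (xb : X) (yb zb : Y) : Prop :=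
  ∀ ε > (0 : ℝ), ∃ δ > (0 : ℝ), ∀ x ∈ ball xb δ, ∀ w ∈ (F x + G x) ∩ ball (yb + zb) δ,
    ∃ y ∈ F x ∩ ball yb ε, ∃ z ∈ G x ∩ ball zb ε, w = y + z

/-!
Sum-stability splits a point `w` of `(F + G) x` near `yb + zb` as `y + z` with `y` and `z` in the
neighborhoods where the Lipschitz-like estimates of `F` and `G` hold. Moving `y` into `F u` and
`z` into `G u` separately and adding the two error balls gives the estimate with constant `l + k`.
-/

theorem closedBall_zero_add_closedBall_zero_subset {E : Type*} [SeminormedAddCommGroup E]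
    (r s : ℝ) : closedBall (0 : E) r + closedBall 0 s ⊆ closedBall 0 (r + s) := by
  rintro _ ⟨p, hp, q, hq, rfl⟩
  rw [mem_closedBall_zero_iff] at hp hq ⊢
  exact norm_add_le_of_le hp hq

theorem add_closedBall_zero_add_add_closedBall_zero_subset {E : Type*}
    [SeminormedAddCommGroup E] (A B : Set E) (r s : ℝ) :
    (A + closedBall 0 r) + (B + closedBall 0 s) ⊆ A + B + closedBall 0 (r + s) := by
  rw [add_add_add_comm]
  exact add_subset_add_left (closedBall_zero_add_closedBall_zero_subset r s)

theorem LocSumStable.exists_forall_mem_nhds {X Y : Type*} [NormedAddCommGroup X]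
    [NormedAddCommGroup Y] {F G : X → Set Y} {xb : X} {yb zb : Y}
    (hsum : LocSumStable F G xb yb zb) {V W : Set Y} (hV : V ∈ 𝓝 yb) (hW : W ∈ 𝓝 zb) :
    ∃ δ > (0 : ℝ), ∀ x ∈ ball xb δ, ∀ w ∈ (F x + G x) ∩ ball (yb + zb) δ,
      ∃ y ∈ F x ∩ V, ∃ z ∈ G x ∩ W, w = y + z := by
  obtain ⟨ε, hε, hVW⟩ := Metric.mem_nhds_iff.mp (prod_mem_nhds hV hW)
  rw [← ball_prod_same] at hVW
  obtain ⟨δ, hδ, hdecomp⟩ := hsum ε hε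
  refine ⟨δ, hδ, fun x hx w hw => ?_⟩
  obtain ⟨y, ⟨hyF, hyb⟩, z, ⟨hzG, hzb⟩, rfl⟩ := hdecomp x hx w hw
  have hyz : (y, z) ∈ V ×ˢ W := hVW ⟨hyb, hzb⟩
  exact ⟨y, ⟨hyF, hyz.1⟩, z, ⟨hzG, hyz.2⟩, rfl⟩

theorem stmt10_general {X Y : Type*}
    [NormedAddCommGroup X] [NormedAddCommGroup Y]
    (F G : X → Set Y) (xb : X) (yb zb : Y)
    (l k : ℝ)
    (hF : LipschitzLikeAround F xb yb l)
    (hG : LipschitzLikeAround G xb zb k)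
    (hsum : LocSumStable F G xb yb zb) :
    LipschitzLikeAround (fun x => F x + G x) xb (yb + zb) (l + k) := by
  obtain ⟨UF, hUF, VF, hVF, hFlip⟩ := hF
  obtain ⟨UG, hUG, VG, hVG, hGlip⟩ := hG
  obtain ⟨δ, hδ, hdecomp⟩ := hsum.exists_forall_mem_nhds hVF hVG
  refine ⟨ball xb δ ∩ UF ∩ UG, inter_mem (inter_mem (ball_mem_nhds _ hδ) hUF) hUG,
    ball (yb + zb) δ, ball_mem_nhds _ hδ, ?_⟩
  rintro x ⟨⟨hxδ, hxF⟩, hxG⟩ u ⟨⟨-, huF⟩, huG⟩ w hw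
  obtain ⟨y, hy, z, hz, rfl⟩ := hdecomp x hxδ w hw
  rw [add_mul]
  exact add_closedBall_zero_add_add_closedBall_zero_subset _ _ _ _
    (add_mem_add (hFlip x hxF u huF hy) (hGlip x hxG u huG hz))

/-- the sum of Lipschitz-like multifunctions is Lipschitz-like,
provided the pair is locally sum-stable. -/
theorem stmt10 {X Y : Type*}
    [NormedAddCommGroup X] [NormedSpace ℝ X] [CompleteSpace X]
    [NormedAddCommGroup Y] [NormedSpace ℝ Y] [CompleteSpace Y]
    (F G : X → Set Y) (xb : X) (yb zb : Y)
    (hybF : yb ∈ F xb) (hzbG : zb ∈ G xb)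
    (l k : ℝ) (hl : 0 < l) (hk : 0 < k)
    (hF : LipschitzLikeAround F xb yb l)
    (hG : LipschitzLikeAround G xb zb k)
    (hsum : LocSumStable F G xb yb zb) :
    LipschitzLikeAround (fun x => F x + G x) xb (yb + zb) (l + k) :=
  stmt10_general F G xb yb zb l k hF hG hsum
end

section
/- Let X, Y be real Banach spaces, F : X ⇒ Y a multifunction, (x̄,ȳ) ∈ Gr F and r, s, l > 0 such that F(x) ∩ B(ȳ,s) ⊆ F(x′) + l‖x−x′‖·D_Y for every x, x′ ∈ B(x̄,r). Then for every (x,y) ∈ Gr F with x ∈ B(x̄, 2⁻¹r) and y ∈ B(ȳ,s), F is l-pseudocalm at (x,y); consequently, F⁻¹ is l⁻¹-open at (y,x) for all such (x,y). -/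
/-!
For `x ∈ B(x̄, r/2)` the ball `B(x, r/2)` lies in `B(x̄, r)`, so the hypothesis applied to the pair
`(x, x')` puts into every `F(x')`, `x' ∈ B(x, r/2)`, a point within `l‖x' - x‖` of `y`. Such points
bound `d(y, F(x'))` (pseudocalmness), and when `‖x' - x‖ < ρ / l` they lie in `B(y, ρ)`, so `x'`
is in `F⁻¹(B(y, ρ))` (openness).
-/

open Metric Set Filter Topology Pointwise

/-- `F` is `l`-pseudocalm at `(x, y)`: there is a neighborhood `U` of `x` such that
`d(y, F(x')) ≤ l‖x' - x‖` for every `x' ∈ U` (with `d(·,∅) = ∞`). -/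
def IsPseudocalmAt {X Y : Type*} [NormedAddCommGroup X] [NormedAddCommGroup Y]
    (F : X → Set Y) (x : X) (y : Y) (l : ℝ) : Prop :=
  ∃ U ∈ 𝓝 x, ∀ x' ∈ U, EMetric.infEdist y (F x') ≤ ENNReal.ofReal (l * ‖x' - x‖)

/-- `T : Y ⇒ X` is `c`-open at `(y, x)`. -/
def IsOpenAtPt {Y X : Type*} [NormedAddCommGroup Y] [NormedAddCommGroup X]
    (T : Y → Set X) (y : Y) (x : X) (c : ℝ) : Prop :=
  ∃ ε > (0 : ℝ), ∀ ρ ∈ Set.Ioo (0 : ℝ) ε, ball x (ρ * c) ⊆ ⋃ y' ∈ ball y ρ, T y'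

theorem exists_dist_le_of_mem_add_closedBall_zero {Y : Type*} [SeminormedAddCommGroup Y]
    {A : Set Y} {y : Y} {c : ℝ} (h : y ∈ A + closedBall (0 : Y) c) : ∃ z ∈ A, dist y z ≤ c := by
  obtain ⟨z, hz, b, hb, rfl⟩ := h
  exact ⟨z, hz, by simpa using hb⟩

section NearbyGraphPoints

variable {X Y : Type*} [NormedAddCommGroup X] [NormedAddCommGroup Y]
  {F : X → Set Y} {x : X} {y : Y} {l δ : ℝ}

theorem isPseudocalmAt_of_forall_mem_ball (hδ : 0 < δ)
    (h : ∀ x' ∈ ball x δ, ∃ z ∈ F x', dist y z ≤ l * dist x' x) : IsPseudocalmAt F x y l := by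
  refine ⟨ball x δ, ball_mem_nhds x hδ, fun x' hx' => ?_⟩
  obtain ⟨z, hz, hyz⟩ := h x' hx'
  calc infEDist y (F x') ≤ edist y z := infEDist_le_edist_of_mem hz
    _ = ENNReal.ofReal (dist y z) := edist_dist y z
    _ ≤ ENNReal.ofReal (l * ‖x' - x‖) := ENNReal.ofReal_le_ofReal (by rwa [← dist_eq_norm])

theorem isOpenAtPt_inverse_of_forall_mem_ball (hδ : 0 < δ) (hl : 0 < l)
    (h : ∀ x' ∈ ball x δ, ∃ z ∈ F x', dist y z ≤ l * dist x' x) :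
    IsOpenAtPt (fun y' => {x' | y' ∈ F x'}) y x l⁻¹ := by
  refine ⟨l * δ, mul_pos hl hδ, fun ρ ⟨_, hρ⟩ x' hx' => ?_⟩
  have hx'ρ : l * dist x' x < ρ := by
    rw [mul_comm, ← lt_mul_inv_iff₀ hl]
    exact mem_ball.1 hx'
  have hx'δ : x' ∈ ball x δ := calc
    dist x' x < ρ * l⁻¹ := hx'
    _ < l * δ * l⁻¹ := by gcongr
    _ = δ := by field_simp
  obtain ⟨z, hz, hyz⟩ := h x' hx'δ
  exact mem_iUnion₂.2 ⟨z, mem_ball_comm.1 (hyz.trans_lt hx'ρ), hz⟩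

end NearbyGraphPoints

theorem stmt18_general {X Y : Type*}
    [NormedAddCommGroup X] [NormedAddCommGroup Y]
    (F : X → Set Y) (xb : X) (yb : Y)
    (r s l : ℝ) (hl : 0 < l)
    (hF : ∀ x ∈ ball xb r, ∀ x' ∈ ball xb r,
      F x ∩ ball yb s ⊆ F x' + closedBall (0 : Y) (l * ‖x - x'‖)) :
    ∀ x y, y ∈ F x → x ∈ ball xb (2⁻¹ * r) → y ∈ ball yb s →
      IsPseudocalmAt F x y l ∧ IsOpenAtPt (fun y' => {x' | y' ∈ F x'}) y x l⁻¹ := by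
  intro x y hyx hx hys
  rw [← div_eq_inv_mul] at hx
  have hr : 0 < r / 2 := pos_of_mem_ball hx
  have near : ∀ x' ∈ ball x (r / 2), ∃ z ∈ F x', dist y z ≤ l * dist x' x := by
    intro x' hx'
    have hxr : x ∈ ball xb r := ball_subset_ball (by linarith) hx
    have hx'r : x' ∈ ball xb r := ball_half_subset x hx hx'
    rw [dist_comm, dist_eq_norm]
    exact exists_dist_le_of_mem_add_closedBall_zero (hF x hxr x' hx'r ⟨hyx, hys⟩)
  exact ⟨isPseudocalmAt_of_forall_mem_ball hr near,
    isOpenAtPt_inverse_of_forall_mem_ball hr hl near⟩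

/-- a locally uniform Lipschitz-like estimate yields pseudocalmness
of `F` and openness of `F⁻¹` at all nearby graph points. -/
theorem stmt18 {X Y : Type*}
    [NormedAddCommGroup X] [NormedSpace ℝ X] [CompleteSpace X]
    [NormedAddCommGroup Y] [NormedSpace ℝ Y] [CompleteSpace Y]
    (F : X → Set Y) (xb : X) (yb : Y) (hgr : yb ∈ F xb)
    (r s l : ℝ) (hr : 0 < r) (hs : 0 < s) (hl : 0 < l)
    (hF : ∀ x ∈ ball xb r, ∀ x' ∈ ball xb r,
      F x ∩ ball yb s ⊆ F x' + closedBall (0 : Y) (l * ‖x - x'‖)) :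
    ∀ x y, y ∈ F x → x ∈ ball xb (2⁻¹ * r) → y ∈ ball yb s →
      IsPseudocalmAt F x y l ∧ IsOpenAtPt (fun y' => {x' | y' ∈ F x'}) y x l⁻¹ :=
  stmt18_general F xb yb r s l hl hF
end
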